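/- arXiv:1102.2873 — 3 statements merged into one kernel-verified Lean document; each statement's English description precedes it below -/
import Mathlib

section
/- Let d ≥ 1 and let M, N ∈ M_d(ℂ) be symmetric with M+N invertible. Set A(M,N) = [[I, I],[−iN, iM]] and B(M,N) = [[N, M],[−iI, iI]] (2d×2d block matrices). Then: (i) Q(M,N)·A(M,N) = B(M,N); (ii) Q(M,N) is symmetric; (iii) Q(M,N) is symplectic, i.e. Q(M,N)ᵀ J Q(M,N) = J, where J = [[0, I],[−I, 0]]. -/
open Matrix

noncomputable section

/-- the block matrix `Q(M,N)` -/
def Qmat {d : ℕ} (M N : Matrix (Fin d) (Fin d) ℂ) :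
    Matrix (Fin d ⊕ Fin d) (Fin d ⊕ Fin d) ℂ :=
  Matrix.fromBlocks ((2 : ℂ) • (M * (M + N)⁻¹ * N)) (Complex.I • ((N - M) * (M + N)⁻¹))
    (Complex.I • ((M + N)⁻¹ * (N - M))) ((2 : ℂ) • (M + N)⁻¹)

/-- the block matrix `A(M,N) = [[I, I],[−iN, iM]]` -/
def Amat {d : ℕ} (M N : Matrix (Fin d) (Fin d) ℂ) :
    Matrix (Fin d ⊕ Fin d) (Fin d ⊕ Fin d) ℂ :=
  Matrix.fromBlocks 1 1 ((-Complex.I) • N) (Complex.I • M)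

/-- the block matrix `B(M,N) = [[N, M],[−iI, iI]]` -/
def Bmat {d : ℕ} (M N : Matrix (Fin d) (Fin d) ℂ) :
    Matrix (Fin d ⊕ Fin d) (Fin d ⊕ Fin d) ℂ :=
  Matrix.fromBlocks N M ((-Complex.I) • (1 : Matrix (Fin d) (Fin d) ℂ))
    (Complex.I • (1 : Matrix (Fin d) (Fin d) ℂ))

/-- the standard symplectic matrix `J = [[0, I],[−I, 0]]` -/
def Jc (d : ℕ) : Matrix (Fin d ⊕ Fin d) (Fin d ⊕ Fin d) ℂ :=
  Matrix.fromBlocks 0 1 (-1) 0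

/-- For symmetric `M, N ∈ M_d(ℂ)` with `M+N` invertible:
(i) `Q(M,N)·A(M,N) = B(M,N)`; (ii) `Q(M,N)` is symmetric; (iii) `Q(M,N)` is symplectic. -/
theorem statement_4 (d : ℕ) (hd : 1 ≤ d) (M N : Matrix (Fin d) (Fin d) ℂ)
    (hM : M.IsSymm) (hN : N.IsSymm) (hMN : IsUnit (M + N)) :
    Qmat M N * Amat M N = Bmat M N ∧ (Qmat M N).IsSymm ∧
      (Qmat M N)ᵀ * Jc d * Qmat M N = Jc d := by
  have hdet : IsUnit (M + N).det := (Matrix.isUnit_iff_isUnit_det _).mp hMN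
  set X := (M + N)⁻¹ with hX
  have h1 : (M + N) * X = 1 := Matrix.mul_nonsing_inv _ hdet
  have h2 : X * (M + N) = 1 := Matrix.nonsing_inv_mul _ hdet
  have hXt : Xᵀ = X := by
    rw [hX, Matrix.transpose_nonsing_inv, Matrix.transpose_add, hM.eq, hN.eq]
  have k1 : M * X * N + N * X * N = N := by
    have := congrArg (· * N) h1; simpa [add_mul] using this
  have k2 : M * X * M + M * X * N = M := by
    have := congrArg (M * ·) h2; simpa [mul_add, mul_one, ← mul_assoc] using this
  have r1 : N * X * N = N - M * X * N := by
    linear_combination (norm := noncomm_ring) k1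
  have r2 : M * X * M = M - M * X * N := by
    linear_combination (norm := noncomm_ring) k2
  have f1 : N * X * M = M * X * N := by
    have := congrArg (N * ·) h2
    simp only [mul_add, mul_one, ← mul_assoc] at this
    linear_combination (norm := noncomm_ring) this - r1
  have f4 : M * X * M * X * N = M * X * N * X * M := by
    calc M * X * M * X * N = M * X * (M * X * N) := by noncomm_ring
      _ = M * X * (N * X * M) := by rw [f1]
      _ = M * X * N * X * M := by noncomm_ring
  have hXN : X * N = 1 - X * M := by
    have := h2; rw [mul_add] at this
    linear_combination (norm := noncomm_ring) this
  have hNX : N * X = 1 - M * X := by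
    have := h1; rw [add_mul] at this
    linear_combination (norm := noncomm_ring) this
  -- X-leading degree-4 facts
  have xf1 : X * N * X * M = X * M * X * N := by
    have := congrArg (X * ·) f1; simpa [← mul_assoc] using this
  have xr1 : X * N * X * N = X * N - X * M * X * N := by
    have := congrArg (X * ·) r1; simpa [← mul_assoc, mul_sub] using this
  have xr2 : X * M * X * M = X * M - X * M * X * N := by
    have := congrArg (X * ·) r2; simpa [← mul_assoc, mul_sub] using this
  -- X-trailing degree-4 facts
  have gf1 : N * X * M * X = M * X * N * X := congrArg (· * X) f1
  have gNN : N * X * N * X = N * X - M * X * N * X := by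
    have := congrArg (· * X) r1; simpa [sub_mul] using this
  have gMM : M * X * M * X = M * X - M * X * N * X := by
    have := congrArg (· * X) r2; simpa [sub_mul] using this
  have hQA : Qmat M N * Amat M N = Bmat M N := by
    rw [Qmat, Amat, Bmat, ← hX, Matrix.fromBlocks_multiply, Matrix.fromBlocks_inj]
    refine ⟨?_, ?_, ?_, ?_⟩ <;>
      simp only [Matrix.mul_one, Matrix.one_mul, Matrix.smul_mul, Matrix.mul_smul, smul_smul,
        mul_neg, neg_mul, Complex.I_mul_I, neg_neg, one_smul, neg_smul, smul_neg,
        sub_mul, mul_sub, ← mul_assoc]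
    · simp only [r1]; match_scalars <;> (first | ring1 | (ring_nf; norm_num [Complex.I_sq]) | norm_num [Complex.I_sq])
    · simp only [f1, r2]; match_scalars <;> (first | ring1 | (ring_nf; norm_num [Complex.I_sq]) | norm_num [Complex.I_sq])
    · simp only [hXN]; match_scalars <;> (first | ring1 | (ring_nf; norm_num [Complex.I_sq]) | norm_num [Complex.I_sq])
    · simp only [hXN]; match_scalars <;> (first | ring1 | (ring_nf; norm_num [Complex.I_sq]) | norm_num [Complex.I_sq])
  have hQsymm : (Qmat M N).IsSymm := by
    show (Qmat M N)ᵀ = Qmat M N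
    rw [Qmat, ← hX, Matrix.fromBlocks_transpose, Matrix.fromBlocks_inj]
    refine ⟨?_, ?_, ?_, ?_⟩ <;>
      simp [Matrix.transpose_smul, Matrix.transpose_mul, Matrix.transpose_sub, hXt,
        hM.eq, hN.eq, ← mul_assoc, f1]
  refine ⟨hQA, hQsymm, ?_⟩
  rw [hQsymm.eq, Qmat, Jc, ← hX, Matrix.fromBlocks_multiply, Matrix.fromBlocks_multiply,
    Matrix.fromBlocks_inj]
  refine ⟨?_, ?_, ?_, ?_⟩ <;>
    simp only [Matrix.mul_zero, Matrix.zero_mul, Matrix.mul_one, Matrix.one_mul,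
      add_zero, zero_add, mul_neg_one, neg_one_mul, mul_neg, neg_mul,
      Matrix.smul_mul, Matrix.mul_smul, smul_smul, Complex.I_mul_I, neg_neg, one_smul,
      neg_smul, smul_neg, sub_mul, mul_sub, ← mul_assoc]
  · simp only [f1, f4]; match_scalars <;> (first | ring1 | (ring_nf; norm_num [Complex.I_sq]) | norm_num [Complex.I_sq])
  · simp only [gf1, gNN, gMM, hNX, sub_mul, one_mul]
    match_scalars <;> (first | ring1 | (ring_nf; norm_num [Complex.I_sq]) | norm_num [Complex.I_sq])
  · simp only [xf1, xr1, xr2, hXN, sub_mul, one_mul]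
    match_scalars <;> (first | ring1 | (ring_nf; norm_num [Complex.I_sq]) | norm_num [Complex.I_sq])
  · match_scalars <;> (first | ring1 | (ring_nf; norm_num [Complex.I_sq]) | norm_num [Complex.I_sq])


end
end

section
/- Let n ≥ 1 and let U, V ∈ M_n(ℂ) with U invertible, Uᵀ V = Vᵀ U, and Vᵀ conj(U) − Uᵀ conj(V) = 2i·I. Then: (i) V U^{−1} is symmetric; (ii) the imaginary part of V U^{−1} equals (Uᵀ)^{−1} conj(U)^{−1} = (conj(U)^{−1})^* conj(U)^{−1}, which is Hermitian positive definite; (iii) setting Λ = −i V U^{−1}, one has Λ + conj(Λ) = 2 (Uᵀ)^{−1} conj(U)^{−1}. -/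
/-!
Write `S = V U⁻¹`. The first relation says `Uᵀ S = Vᵀ`, so `S = (Uᵀ)⁻¹ Vᵀ = Sᵀ`. Multiplying the
second relation by `(Uᵀ)⁻¹` on the left and `conj(U)⁻¹` on the right then gives
`S - conj S = 2i (Uᵀ)⁻¹ conj(U)⁻¹`, which is `2i Im S`; the same identity read as a statement
about `-i S` gives (iii). Finally `(Uᵀ)⁻¹ = (conj(U)⁻¹)ᴴ`, so `Im S` is the Gram matrix `Aᴴ A`
of the invertible matrix `A = conj(U)⁻¹`, hence positive definite.
-/

open Matrix
open scoped ComplexOrder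

noncomputable section

def imMat {m : Type*} (M : Matrix m m ℂ) : Matrix m m ℝ := Matrix.of fun i j => (M i j).im

namespace Matrix

section RingHom

variable {m R : Type*} [Fintype m] [DecidableEq m] [CommRing R]

theorem isUnit_det_map {S : Type*} [CommRing S] (f : R →+* S) {U : Matrix m m R}
    (hU : IsUnit U.det) : IsUnit (U.map f).det := by
  simpa [RingHom.map_det] using hU.map f

theorem map_nonsing_inv {S : Type*} [CommRing S] (f : R →+* S) {U : Matrix m m R}
    (hU : IsUnit U.det) : U⁻¹.map f = (U.map f)⁻¹ := by
  refine (inv_eq_right_inv ?_).symm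
  rw [← Matrix.map_mul, mul_nonsing_inv U hU, Matrix.map_one _ f.map_zero f.map_one]

theorem transpose_mul_mul_nonsing_inv {U V : Matrix m m R} (hU : IsUnit U.det)
    (h : Uᵀ * V = Vᵀ * U) : Uᵀ * (V * U⁻¹) = Vᵀ := by
  rw [← Matrix.mul_assoc, h, Matrix.mul_assoc, mul_nonsing_inv U hU, Matrix.mul_one]

theorem isSymm_mul_nonsing_inv {U V : Matrix m m R} (hU : IsUnit U.det) (h : Uᵀ * V = Vᵀ * U) :
    (V * U⁻¹).IsSymm := by
  have hUt : IsUnit Uᵀ.det := by rwa [det_transpose]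
  rw [IsSymm, transpose_mul, transpose_nonsing_inv, ← transpose_mul_mul_nonsing_inv hU h,
    nonsing_inv_mul_cancel_left _ _ hUt]

theorem mul_nonsing_inv_sub_map {U V : Matrix m m R} (f : R →+* R) (hU : IsUnit U.det)
    (h : Uᵀ * V = Vᵀ * U) :
    V * U⁻¹ - (V * U⁻¹).map f = (Uᵀ)⁻¹ * (Vᵀ * U.map f - Uᵀ * V.map f) * (U.map f)⁻¹ := by
  have hUt : IsUnit Uᵀ.det := by rwa [det_transpose]
  rw [Matrix.mul_sub, Matrix.sub_mul, Matrix.mul_assoc, Matrix.mul_assoc, Matrix.mul_assoc,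
    mul_nonsing_inv _ (isUnit_det_map f hU), Matrix.mul_one, ← transpose_mul_mul_nonsing_inv hU h,
    Matrix.mul_assoc Uᵀ, Matrix.map_mul, map_nonsing_inv f hU]
  simp only [nonsing_inv_mul_cancel_left _ _ hUt]

end RingHom

theorem posDef_conjTranspose_nonsing_inv_mul_nonsing_inv {m R : Type*} [Fintype m] [DecidableEq m]
    [CommRing R] [PartialOrder R] [StarRing R] [StarOrderedRing R] [NoZeroDivisors R]
    {A : Matrix m m R} (hA : IsUnit A.det) : (A⁻¹ᴴ * A⁻¹).PosDef :=
  .conjTranspose_mul_self _ <| mulVec_injective_of_isUnit <|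
    isUnit_nonsing_inv_iff.2 <| (isUnit_iff_isUnit_det A).2 hA

theorem conjTranspose_map_starRingEnd {m R : Type*} [CommSemiring R] [StarRing R]
    (U : Matrix m m R) :
    (U.map (fun z => (starRingEnd R) z))ᴴ = Uᵀ := by
  ext i j
  simp [starRingEnd_apply]

theorem sub_map_conj_eq_smul_imMat {m : Type*} (A : Matrix m m ℂ) :
    A - A.map (fun z => (starRingEnd ℂ) z) =
      (2 * Complex.I) • (imMat A).map (fun r => (r : ℂ)) := by
  ext i j
  simp [imMat, Complex.sub_conj]
  ring

theorem neg_I_smul_add_map_conj_eq_smul_imMat {m : Type*} (A : Matrix m m ℂ) :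
    (-Complex.I) • A + ((-Complex.I) • A).map (fun z => (starRingEnd ℂ) z) =
      (2 : ℂ) • (imMat A).map (fun r => (r : ℂ)) := by
  ext i j
  simp [imMat, Complex.ext_iff]
  ring

end Matrix

theorem statement_7_general (n : ℕ) (U V : Matrix (Fin n) (Fin n) ℂ)
    (hU : IsUnit U)
    (h1 : Uᵀ * V = Vᵀ * U)
    (h2 : Vᵀ * U.map (fun z => (starRingEnd ℂ) z) - Uᵀ * V.map (fun z => (starRingEnd ℂ) z) =
      ((2 : ℂ) * Complex.I) • (1 : Matrix (Fin n) (Fin n) ℂ)) :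
    (V * U⁻¹).IsSymm ∧
      (imMat (V * U⁻¹)).map (fun r => (r : ℂ)) =
        (Uᵀ)⁻¹ * (U.map (fun z => (starRingEnd ℂ) z))⁻¹ ∧
      (Uᵀ)⁻¹ * (U.map (fun z => (starRingEnd ℂ) z))⁻¹ =
        ((U.map (fun z => (starRingEnd ℂ) z))⁻¹)ᴴ * (U.map (fun z => (starRingEnd ℂ) z))⁻¹ ∧
      ((Uᵀ)⁻¹ * (U.map (fun z => (starRingEnd ℂ) z))⁻¹).PosDef ∧
      (-(Complex.I)) • (V * U⁻¹) +
          ((-(Complex.I)) • (V * U⁻¹)).map (fun z => (starRingEnd ℂ) z) =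
        (2 : ℂ) • ((Uᵀ)⁻¹ * (U.map (fun z => (starRingEnd ℂ) z))⁻¹) := by
  have hdet : IsUnit U.det := (isUnit_iff_isUnit_det U).1 hU
  have him : (imMat (V * U⁻¹)).map (fun r => (r : ℂ)) =
      (Uᵀ)⁻¹ * (U.map (fun z => (starRingEnd ℂ) z))⁻¹ := by
    refine smul_right_injective _ (by simp : (2 * Complex.I : ℂ) ≠ 0) ?_
    dsimp only
    rw [← sub_map_conj_eq_smul_imMat, mul_nonsing_inv_sub_map _ hdet h1, h2, Matrix.mul_smul,
      Matrix.smul_mul, Matrix.mul_one]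
  have hgram : (Uᵀ)⁻¹ * (U.map (fun z => (starRingEnd ℂ) z))⁻¹ =
      ((U.map (fun z => (starRingEnd ℂ) z))⁻¹)ᴴ * (U.map (fun z => (starRingEnd ℂ) z))⁻¹ := by
    rw [conjTranspose_nonsing_inv, conjTranspose_map_starRingEnd]
  refine ⟨isSymm_mul_nonsing_inv hdet h1, him, hgram, ?_, ?_⟩
  · rw [hgram]
    exact posDef_conjTranspose_nonsing_inv_mul_nonsing_inv (isUnit_det_map _ hdet)
  · rw [neg_I_smul_add_map_conj_eq_smul_imMat, him]

/-- Let `U, V ∈ M_n(ℂ)` with `U` invertible, `Uᵀ V = Vᵀ U` and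
`Vᵀ conj(U) − Uᵀ conj(V) = 2i·I`. Then (i) `V U⁻¹` is symmetric;
(ii) `Im (V U⁻¹) = (Uᵀ)⁻¹ conj(U)⁻¹ = (conj(U)⁻¹)^* conj(U)⁻¹`, which is Hermitian positive
definite; (iii) with `Λ = −i V U⁻¹`, `Λ + conj(Λ) = 2 (Uᵀ)⁻¹ conj(U)⁻¹`. -/
theorem statement_7 (n : ℕ) (hn : 1 ≤ n) (U V : Matrix (Fin n) (Fin n) ℂ)
    (hU : IsUnit U)
    (h1 : Uᵀ * V = Vᵀ * U)
    (h2 : Vᵀ * U.map (fun z => (starRingEnd ℂ) z) - Uᵀ * V.map (fun z => (starRingEnd ℂ) z) =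
      ((2 : ℂ) * Complex.I) • (1 : Matrix (Fin n) (Fin n) ℂ)) :
    (V * U⁻¹).IsSymm ∧
      (imMat (V * U⁻¹)).map (fun r => (r : ℂ)) =
        (Uᵀ)⁻¹ * (U.map (fun z => (starRingEnd ℂ) z))⁻¹ ∧
      (Uᵀ)⁻¹ * (U.map (fun z => (starRingEnd ℂ) z))⁻¹ =
        ((U.map (fun z => (starRingEnd ℂ) z))⁻¹)ᴴ * (U.map (fun z => (starRingEnd ℂ) z))⁻¹ ∧
      ((Uᵀ)⁻¹ * (U.map (fun z => (starRingEnd ℂ) z))⁻¹).PosDef ∧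
      (-(Complex.I)) • (V * U⁻¹) +
          ((-(Complex.I)) • (V * U⁻¹)).map (fun z => (starRingEnd ℂ) z) =
        (2 : ℂ) • ((Uᵀ)⁻¹ * (U.map (fun z => (starRingEnd ℂ) z))⁻¹) :=
  statement_7_general n U V hU h1 h2

end
end

section
/- Let n ≥ 1, a > 0, c > 0, let K ⊂ ℝ²ⁿ be compact, and let Φ : ℝⁿ × ℝ²ⁿ → ℂ be measurable with Im Φ(x,z,θ) ≥ c|x−z|² for all x ∈ ℝⁿ and all (z,θ) ∈ K. Then there exists C > 0 (depending only on n, c, a and K) such that for all ε ∈ (0,1] and all h ∈ L²(ℝ²ⁿ) with support contained in K, the function x ↦ ∫_{{(z,θ) : |x−z| ≥ a}} h(z,θ) e^{iΦ(x,z,θ)/ε} dz dθ belongs to L²(ℝⁿ) with ‖·‖_{L²(ℝⁿ)} ≤ C e^{−c a²/(2ε)} ‖h‖_{L²(ℝ²ⁿ)}. -/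
open MeasureTheory
open scoped Real ENNReal

noncomputable section

abbrev Evec (n : ℕ) := EuclideanSpace ℝ (Fin n)

/-!
On `{|x - z| ≥ a}` the lower bound on `Im Φ` gives, for `ε ≤ 1`,
`|e^{iΦ/ε}| ≤ e^{-c|x-z|²/ε} ≤ e^{-ca²/(2ε)} e^{-c|x-z|²/2}` (split `c|x-z|²/ε` into two halves and
use `|x-z| ≥ a` on one, `ε ≤ 1` on the other). The integral is therefore dominated by
`e^{-ca²/(2ε)}` times the integral operator with kernel `1_K(z,θ) e^{-c|x-z|²/2}`. By Cauchy–Schwarz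
its `L²` operator norm is at most its Hilbert–Schmidt norm, whose square is `|K| ∫ e^{-c|y|²} dy`
by translation invariance; this is finite and independent of `Φ`, `ε` and `h`.
-/

open Set Function

section Kernels

variable {α β : Type*} [MeasurableSpace α] [MeasurableSpace β] {μ : Measure α} {ν : Measure β}

theorem ENNReal.lintegral_mul_sq_le {f g : α → ℝ≥0∞} (hf : AEMeasurable f μ)
    (hg : AEMeasurable g μ) :
    (∫⁻ a, f a * g a ∂μ) ^ 2 ≤ (∫⁻ a, f a ^ 2 ∂μ) * ∫⁻ a, g a ^ 2 ∂μ := by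
  have h := ENNReal.lintegral_mul_le_Lp_mul_Lq μ Real.HolderConjugate.two_two hf hg
  simp only [Pi.mul_apply, ENNReal.rpow_two] at h
  calc (∫⁻ a, f a * g a ∂μ) ^ 2
      ≤ ((∫⁻ a, f a ^ 2 ∂μ) ^ (1 / 2 : ℝ) * (∫⁻ a, g a ^ 2 ∂μ) ^ (1 / 2 : ℝ)) ^ 2 := by
        gcongr
    _ = (∫⁻ a, f a ^ 2 ∂μ) * ∫⁻ a, g a ^ 2 ∂μ := by
        simp only [mul_pow, ← ENNReal.rpow_natCast, ← ENNReal.rpow_mul]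
        norm_num

theorem eLpNorm_two_le_of_enorm_le_lintegral_mul {E F : Type*} [NormedAddCommGroup E]
    [NormedAddCommGroup F] [SFinite μ] {f : β → E} {g : α → F} {k : β → α → ℝ≥0∞} {A : ℝ≥0∞}
    (hg : AEStronglyMeasurable g μ) (hk : Measurable (uncurry k))
    (hf : ∀ x, ‖f x‖ₑ ≤ A * ∫⁻ p, ‖g p‖ₑ * k x p ∂μ) :
    eLpNorm f 2 ν ≤ A * (∫⁻ x, ∫⁻ p, k x p ^ 2 ∂μ ∂ν) ^ (1 / 2 : ℝ) * eLpNorm g 2 μ := by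
  have hf_sq (x : β) :
      ‖f x‖ₑ ^ 2 ≤ A ^ 2 * (∫⁻ p, ‖g p‖ₑ ^ 2 ∂μ) * ∫⁻ p, k x p ^ 2 ∂μ :=
    calc ‖f x‖ₑ ^ 2 ≤ A ^ 2 * (∫⁻ p, ‖g p‖ₑ * k x p ∂μ) ^ 2 := by
          rw [← mul_pow]
          gcongr
          exact hf x
      _ ≤ A ^ 2 * (∫⁻ p, ‖g p‖ₑ ^ 2 ∂μ) * ∫⁻ p, k x p ^ 2 ∂μ := by
          rw [mul_assoc]
          gcongr
          exact ENNReal.lintegral_mul_sq_le hg.enorm hk.of_uncurry_left.aemeasurable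
  have h_int : ∫⁻ x, ‖f x‖ₑ ^ 2 ∂ν ≤
      A ^ 2 * (∫⁻ x, ∫⁻ p, k x p ^ 2 ∂μ ∂ν) * ∫⁻ p, ‖g p‖ₑ ^ 2 ∂μ :=
    calc ∫⁻ x, ‖f x‖ₑ ^ 2 ∂ν
        ≤ ∫⁻ x, A ^ 2 * (∫⁻ p, ‖g p‖ₑ ^ 2 ∂μ) * ∫⁻ p, k x p ^ 2 ∂μ ∂ν := lintegral_mono hf_sq
      _ = A ^ 2 * (∫⁻ x, ∫⁻ p, k x p ^ 2 ∂μ ∂ν) * ∫⁻ p, ‖g p‖ₑ ^ 2 ∂μ := by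
          have hk_sq : Measurable fun x => ∫⁻ p, k x p ^ 2 ∂μ :=
            (hk.pow_const 2).lintegral_prod_right'
          rw [lintegral_const_mul _ hk_sq]
          ring
  simp only [eLpNorm_eq_lintegral_rpow_enorm_toReal two_ne_zero ENNReal.ofNat_ne_top,
    ENNReal.toReal_ofNat, ENNReal.rpow_two]
  calc (∫⁻ x, ‖f x‖ₑ ^ 2 ∂ν) ^ (1 / 2 : ℝ)
      ≤ (A ^ 2 * (∫⁻ x, ∫⁻ p, k x p ^ 2 ∂μ ∂ν) * ∫⁻ p, ‖g p‖ₑ ^ 2 ∂μ) ^ (1 / 2 : ℝ) := by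
        gcongr
    _ = A * (∫⁻ x, ∫⁻ p, k x p ^ 2 ∂μ ∂ν) ^ (1 / 2 : ℝ) * (∫⁻ p, ‖g p‖ₑ ^ 2 ∂μ) ^ (1 / 2 : ℝ) := by
        rw [ENNReal.mul_rpow_of_nonneg _ _ (by norm_num),
          ENNReal.mul_rpow_of_nonneg _ _ (by norm_num), ← ENNReal.rpow_natCast, ← ENNReal.rpow_mul]
        norm_num

theorem lintegral_setLIntegral_comp_sub_fst {G H : Type*} [MeasurableSpace G] [MeasurableSpace H]
    [AddGroup G] [MeasurableAdd G] [MeasurableSub₂ G] (μ : Measure G) [μ.IsAddRightInvariant]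
    [SFinite μ] (ν : Measure (G × H)) [SFinite ν] (K : Set (G × H)) {ψ : G → ℝ≥0∞}
    (hψ : Measurable ψ) :
    ∫⁻ x, ∫⁻ p in K, ψ (x - p.1) ∂ν ∂μ = ν K * ∫⁻ y, ψ y ∂μ := by
  have hψ_sub : Measurable (uncurry fun x (p : G × H) => ψ (x - p.1)) :=
    hψ.comp (measurable_fst.sub (measurable_fst.comp measurable_snd))
  rw [lintegral_lintegral_swap hψ_sub.aemeasurable]
  simp_rw [lintegral_sub_right_eq_self ψ, setLIntegral_const, mul_comm]

theorem MeasureTheory.AEStronglyMeasurable.setIntegral_prod_right {E : Type*}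
    [NormedAddCommGroup E] [NormedSpace ℝ E] [SFinite ν] {f : α × β → E}
    (hf : AEStronglyMeasurable f (μ.prod ν)) {S : Set (α × β)} (hS : MeasurableSet S) :
    AEStronglyMeasurable (fun x => ∫ y in {y | (x, y) ∈ S}, f (x, y) ∂ν) μ := by
  refine (hf.indicator hS).integral_prod_right'.congr (.of_forall fun x => ?_)
  exact integral_indicator (measurable_prodMk_left hS)

theorem enorm_setIntegral_mul_le {𝕜 : Type*} [NormedDivisionRing 𝕜] [NormedSpace ℝ 𝕜] {S K : Set α}
    (hS : MeasurableSet S) (hK : MeasurableSet K) {g e : α → 𝕜} {φ : α → ℝ≥0∞}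
    (hg : support g ⊆ K) (he : ∀ p ∈ S ∩ K, ‖e p‖ₑ ≤ φ p) :
    ‖∫ p in S, g p * e p ∂μ‖ₑ ≤ ∫⁻ p in K, ‖g p‖ₑ * φ p ∂μ := by
  have h_supp : support (S.indicator fun p => ‖g p * e p‖ₑ) ⊆ K := fun p hp =>
    hg (left_ne_zero_of_mul (enorm_ne_zero.1 (indicator_apply_ne_zero.1 hp).2))
  calc ‖∫ p in S, g p * e p ∂μ‖ₑ ≤ ∫⁻ p in S, ‖g p * e p‖ₑ ∂μ := enorm_integral_le_lintegral_enorm _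
    _ = ∫⁻ p in K, S.indicator (fun p => ‖g p * e p‖ₑ) p ∂μ := by
        rw [setLIntegral_eq_of_support_subset h_supp, lintegral_indicator hS]
    _ ≤ ∫⁻ p in K, ‖g p‖ₑ * φ p ∂μ := by
        refine setLIntegral_mono' hK fun p hpK => ?_
        by_cases hpS : p ∈ S
        · rw [indicator_of_mem hpS, enorm_mul]
          gcongr
          exact he p ⟨hpS, hpK⟩
        · simp [indicator_of_notMem hpS]

end Kernels

theorem integrable_rexp_neg_mul_sq_norm {V : Type*} [NormedAddCommGroup V]
    [InnerProductSpace ℝ V] [FiniteDimensional ℝ V] [MeasurableSpace V] [BorelSpace V] {b : ℝ}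
    (hb : 0 < b) : Integrable fun v : V => Real.exp (-b * ‖v‖ ^ 2) := by
  refine (GaussianFourier.integrable_cexp_neg_mul_sq_norm_add (V := V) (b := b) (by simpa) 0
    0).norm.congr (.of_forall fun v => ?_)
  simp [Complex.norm_exp, ← Complex.ofReal_pow]

theorem lintegral_setLIntegral_gaussian_sq_lt_top {V W : Type*} [NormedAddCommGroup V]
    [InnerProductSpace ℝ V] [FiniteDimensional ℝ V] [MeasurableSpace V] [BorelSpace V]
    [MeasurableSpace W] {ν : Measure (V × W)} [SFinite ν] {K : Set (V × W)} (hK : ν K ≠ ∞)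
    {c : ℝ} (hc : 0 < c) :
    ∫⁻ x : V, ∫⁻ p in K, ENNReal.ofReal (Real.exp (-(c / 2) * ‖x - p.1‖ ^ 2)) ^ 2 ∂ν < ∞ := by
  have h_sq (r : ℝ) :
      ENNReal.ofReal (Real.exp (-(c / 2) * r)) ^ 2 = ENNReal.ofReal (Real.exp (-c * r)) := by
    rw [← ENNReal.ofReal_pow (Real.exp_nonneg _), ← Real.exp_nat_mul]
    ring_nf
  simp_rw [h_sq]
  rw [lintegral_setLIntegral_comp_sub_fst volume ν K
    (ψ := fun y => ENNReal.ofReal (Real.exp (-c * ‖y‖ ^ 2))) (by fun_prop)]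
  exact ENNReal.mul_lt_top hK.lt_top (integrable_rexp_neg_mul_sq_norm hc).lintegral_lt_top

theorem Complex.norm_exp_I_mul_div_ofReal (w : ℂ) (ε : ℝ) :
    ‖Complex.exp (Complex.I * w / ε)‖ = Real.exp (-w.im / ε) := by
  rw [Complex.norm_exp, Complex.div_ofReal_re]
  simp [Complex.mul_re]

theorem Real.exp_neg_div_le_exp_mul_exp {a c r t ε : ℝ} (hc : 0 ≤ c) (ha : 0 ≤ a) (har : a ≤ r)
    (hrt : c * r ^ 2 ≤ t) (hε : ε ∈ Ioc (0 : ℝ) 1) :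
    Real.exp (-t / ε) ≤ Real.exp (-(c * a ^ 2) / (2 * ε)) * Real.exp (-(c / 2) * r ^ 2) := by
  obtain ⟨hε₀, hε₁⟩ := hε
  rw [← Real.exp_add, Real.exp_le_exp, div_le_iff₀ hε₀]
  have h_ar : c * a ^ 2 ≤ c * r ^ 2 := by gcongr
  have h_expand : (-(c * a ^ 2) / (2 * ε) + -(c / 2) * r ^ 2) * ε =
      -(c * a ^ 2) / 2 - c / 2 * r ^ 2 * ε := by
    field_simp
    ring
  nlinarith [h_ar, h_expand, mul_nonneg (mul_nonneg hc (sq_nonneg r)) (sub_nonneg.2 hε₁)]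

theorem enorm_setIntegral_mul_cexp_le {V W : Type*} [NormedAddCommGroup V] [MeasurableSpace V]
    [OpensMeasurableSpace V] [MeasurableSpace W] {ν : Measure (V × W)} {a c ε : ℝ} (ha : 0 ≤ a)
    (hc : 0 ≤ c) (hε : ε ∈ Ioc (0 : ℝ) 1) {K : Set (V × W)} (hK : MeasurableSet K)
    {h Φ : V × W → ℂ} (hsupp : support h ⊆ K) (x : V)
    (hΦ : ∀ p ∈ K, c * ‖x - p.1‖ ^ 2 ≤ (Φ p).im) :
    ‖∫ p in {p | a ≤ ‖x - p.1‖}, h p * Complex.exp (Complex.I * Φ p / ε) ∂ν‖ₑ ≤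
      ENNReal.ofReal (Real.exp (-(c * a ^ 2) / (2 * ε))) *
        ∫⁻ p in K, ‖h p‖ₑ * ENNReal.ofReal (Real.exp (-(c / 2) * ‖x - p.1‖ ^ 2)) ∂ν := by
  set E := ENNReal.ofReal (Real.exp (-(c * a ^ 2) / (2 * ε)))
  have h_phase : ∀ p ∈ {p : V × W | a ≤ ‖x - p.1‖} ∩ K, ‖Complex.exp (Complex.I * Φ p / ε)‖ₑ ≤
      E * ENNReal.ofReal (Real.exp (-(c / 2) * ‖x - p.1‖ ^ 2)) := by
    rintro p ⟨hpS, hpK⟩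
    rw [← ofReal_norm, Complex.norm_exp_I_mul_div_ofReal, ← ENNReal.ofReal_mul (Real.exp_nonneg _)]
    exact ENNReal.ofReal_le_ofReal (Real.exp_neg_div_le_exp_mul_exp hc ha hpS (hΦ p hpK) hε)
  have hS : MeasurableSet {p : V × W | a ≤ ‖x - p.1‖} :=
    measurableSet_le measurable_const ((continuous_const.sub continuous_id).norm.measurable.comp
      measurable_fst)
  calc _ ≤ ∫⁻ p in K, ‖h p‖ₑ * (E * ENNReal.ofReal (Real.exp (-(c / 2) * ‖x - p.1‖ ^ 2))) ∂ν :=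
        enorm_setIntegral_mul_le hS hK hsupp h_phase
    _ = E * ∫⁻ p in K, ‖h p‖ₑ * ENNReal.ofReal (Real.exp (-(c / 2) * ‖x - p.1‖ ^ 2)) ∂ν := by
        rw [← lintegral_const_mul' _ _ ENNReal.ofReal_ne_top]
        congr with p
        ring

theorem statement_18_general (n : ℕ) (a c : ℝ) (ha : 0 < a) (hc : 0 < c)
    (K : Set (Evec n × Evec n)) (hK : IsCompact K) :
    ∃ C > (0 : ℝ),
      ∀ Φ : Evec n → Evec n × Evec n → ℂ,
        Measurable (fun q : Evec n × (Evec n × Evec n) => Φ q.1 q.2) →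
        (∀ x : Evec n, ∀ p ∈ K, c * ‖x - p.1‖ ^ 2 ≤ (Φ x p).im) →
        ∀ ε ∈ Set.Ioc (0 : ℝ) 1, ∀ h : Evec n × Evec n → ℂ,
          MemLp h 2 (volume : Measure (Evec n × Evec n)) → Function.support h ⊆ K →
          MemLp (fun x : Evec n =>
              ∫ p in {p : Evec n × Evec n | a ≤ ‖x - p.1‖},
                h p * Complex.exp (Complex.I * Φ x p / (ε : ℂ))) 2
            (volume : Measure (Evec n)) ∧
          eLpNorm (fun x : Evec n =>
              ∫ p in {p : Evec n × Evec n | a ≤ ‖x - p.1‖},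
                h p * Complex.exp (Complex.I * Φ x p / (ε : ℂ))) 2 volume ≤
            ENNReal.ofReal (C * Real.exp (-(c * a ^ 2) / (2 * ε))) * eLpNorm h 2 volume := by
  set B : ℝ≥0∞ := (∫⁻ x : Evec n, ∫⁻ p in K,
    ENNReal.ofReal (Real.exp (-(c / 2) * ‖x - p.1‖ ^ 2)) ^ 2) ^ (1 / 2 : ℝ)
  have hB : B ≠ ∞ := ENNReal.rpow_ne_top_of_nonneg (by norm_num)
    (lintegral_setLIntegral_gaussian_sq_lt_top hK.measure_lt_top.ne hc).ne
  refine ⟨B.toReal + 1, by positivity, fun Φ hΦm hΦ ε hε h hh hsupp => ?_⟩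
  set F : Evec n → ℂ := fun x => ∫ p in {p : Evec n × Evec n | a ≤ ‖x - p.1‖},
    h p * Complex.exp (Complex.I * Φ x p / (ε : ℂ))
  have hS : MeasurableSet {q : Evec n × (Evec n × Evec n) | a ≤ ‖q.1 - q.2.1‖} :=
    measurableSet_le measurable_const (by fun_prop)
  have hF_meas : AEStronglyMeasurable F volume :=
    (hh.1.comp_snd.mul (Complex.measurable_exp.comp
      ((measurable_const.mul hΦm).div_const _)).aestronglyMeasurable).setIntegral_prod_right hS
  have hF_bound := calc
    eLpNorm F 2 volume
      ≤ ENNReal.ofReal (Real.exp (-(c * a ^ 2) / (2 * ε))) * B * eLpNorm h 2 (volume.restrict K) :=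
        eLpNorm_two_le_of_enorm_le_lintegral_mul hh.1.restrict (by fun_prop) fun x =>
          enorm_setIntegral_mul_cexp_le ha.le hc.le hε hK.measurableSet hsupp x (hΦ x)
    _ ≤ ENNReal.ofReal ((B.toReal + 1) * Real.exp (-(c * a ^ 2) / (2 * ε))) *
          eLpNorm h 2 volume := by
        rw [mul_comm (ENNReal.ofReal _) B, ENNReal.ofReal_mul (by positivity)]
        gcongr
        · exact (ENNReal.ofReal_toReal hB).symm.trans_le (ENNReal.ofReal_le_ofReal (by linarith))
        · exact Measure.restrict_le_self
  exact ⟨⟨hF_meas, hF_bound.trans_lt (ENNReal.mul_lt_top ENNReal.ofReal_lt_top hh.2)⟩, hF_bound⟩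

/-- Let `a, c > 0`, `K ⊂ ℝ²ⁿ` compact and `Φ` measurable with
`Im Φ(x,z,θ) ≥ c|x−z|²` for `(z,θ) ∈ K`. Then there is `C > 0` (depending only on
`n, c, a, K`) such that for all `ε ∈ (0,1]` and all `h ∈ L²` supported in `K`, the function
`x ↦ ∫_{|x−z| ≥ a} h(z,θ) e^{iΦ(x,z,θ)/ε} dz dθ` is in `L²(ℝⁿ)` with norm at most
`C e^{−ca²/(2ε)} ‖h‖_{L²}`. -/
theorem statement_18 (n : ℕ) (hn : 1 ≤ n) (a c : ℝ) (ha : 0 < a) (hc : 0 < c)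
    (K : Set (Evec n × Evec n)) (hK : IsCompact K) :
    ∃ C > (0 : ℝ),
      ∀ Φ : Evec n → Evec n × Evec n → ℂ,
        Measurable (fun q : Evec n × (Evec n × Evec n) => Φ q.1 q.2) →
        (∀ x : Evec n, ∀ p ∈ K, c * ‖x - p.1‖ ^ 2 ≤ (Φ x p).im) →
        ∀ ε ∈ Set.Ioc (0 : ℝ) 1, ∀ h : Evec n × Evec n → ℂ,
          MemLp h 2 (volume : Measure (Evec n × Evec n)) → Function.support h ⊆ K →
          MemLp (fun x : Evec n =>
              ∫ p in {p : Evec n × Evec n | a ≤ ‖x - p.1‖},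
                h p * Complex.exp (Complex.I * Φ x p / (ε : ℂ))) 2
            (volume : Measure (Evec n)) ∧
          eLpNorm (fun x : Evec n =>
              ∫ p in {p : Evec n × Evec n | a ≤ ‖x - p.1‖},
                h p * Complex.exp (Complex.I * Φ x p / (ε : ℂ))) 2 volume ≤
            ENNReal.ofReal (C * Real.exp (-(c * a ^ 2) / (2 * ε))) * eLpNorm h 2 volume :=
  statement_18_general n a c ha hc K hK

end
end
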